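/- Let a ≥ 6n+1, Λ = aℤⁿ, and i, j ∈ {±1, ±2, ±3}. If i·v(σ₁, x₁) = j·v(σ₂, x₂) in ℤⁿ/aℤⁿ, then either (i = j, σ₁ = σ₂, x₁ = x₂) or (i = −j, σ₁ = σ₂, x₁ = −x₂). -/

import Mathlib

/-!
Both sides are integer vectors with entries of absolute value at most `3n < a / 2`, so the
congruence modulo `a` is an equality `i • v(σ₁, x₁) = j • v(σ₂, x₂)` in `ℤⁿ`. Summing absolute
values gives `|i| (1 + ⋯ + n) = |j| (1 + ⋯ + n)`, so `j = ±i`; cancelling `i` and using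
`v(σ, -x) = -v(σ, x)` leaves an equality `v(σ₁, x₁) = v(σ₂, ±x₂)`, and `(σ, x)` can be read off
`v(σ, x)`: `σ⁻¹ k` from the absolute value of the `k`-th entry, `x k` from its sign.
-/

/-- The set of flags of the combinatorial cubic toroid: triples `(σ, x, t)` with
`σ ∈ Sₙ`, `x ∈ {±1}ⁿ` and `t ∈ ℤⁿ/Λ`; the *facet* of a flag is its third coordinate. -/
abbrev TFlag (n : ℕ) (Λ : Submodule ℤ (Fin n → ℤ)) :=
  Equiv.Perm (Fin n) × (Fin n → ℤˣ) × ((Fin n → ℤ) ⧸ Λ)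

/-- The vector `v(σ, x) = x·(σv₀)` where `v₀ = (1, 2, …, n)`: the entries of `v₀` are
permuted by `σ` and then the signs are changed according to `x`. -/
def vVec {n : ℕ} (σ : Equiv.Perm (Fin n)) (x : Fin n → ℤˣ) : Fin n → ℤ :=
  fun k => ((x k : ℤ)) * (((σ⁻¹ k : Fin n) : ℕ) + 1)


/-- The lattice `Λ_a = aℤⁿ` as a submodule of `ℤⁿ`. -/
def dvdLattice (n a : ℕ) : Submodule ℤ (Fin n → ℤ) where
  carrier := {x | ∀ i, (a : ℤ) ∣ x i}
  add_mem' := by intro p q hp hq i; exact dvd_add (hp i) (hq i)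
  zero_mem' := by intro i; simp
  smul_mem' := by intro c x hx i; exact (hx i).mul_left c

theorem eq_of_mk_eq_mk_dvdLattice {n a : ℕ} {u v : Fin n → ℤ} {b : ℤ} (hab : 2 * b < a)
    (hu : ∀ k, |u k| ≤ b) (hv : ∀ k, |v k| ≤ b)
    (h : (Submodule.Quotient.mk u : (Fin n → ℤ) ⧸ dvdLattice n a) = Submodule.Quotient.mk v) :
    u = v := by
  have hdvd : ∀ k, (a : ℤ) ∣ u k - v k := (Submodule.Quotient.eq _).1 h
  funext k
  have hlt : |u k - v k| < a :=
    (abs_sub (u k) (v k)).trans_lt (by linarith [hu k, hv k])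
  exact sub_eq_zero.1 (Int.eq_zero_of_abs_lt_dvd (hdvd k) hlt)

section vVec

variable {n : ℕ}

theorem vVec_neg (σ : Equiv.Perm (Fin n)) (x : Fin n → ℤˣ) : vVec σ (-x) = -vVec σ x := by
  funext k
  simp [vVec]

theorem abs_vVec (σ : Equiv.Perm (Fin n)) (x : Fin n → ℤˣ) (k : Fin n) :
    |vVec σ x k| = ((σ⁻¹ k : Fin n) : ℕ) + 1 := by
  rw [vVec, abs_mul, Int.isUnit_iff_abs_eq.1 (x k).isUnit, one_mul]
  exact abs_of_nonneg (by positivity)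

theorem abs_vVec_le (σ : Equiv.Perm (Fin n)) (x : Fin n → ℤˣ) (k : Fin n) :
    |vVec σ x k| ≤ n := by
  rw [abs_vVec]
  exact_mod_cast (σ⁻¹ k).is_lt

theorem sum_abs_vVec (σ : Equiv.Perm (Fin n)) (x : Fin n → ℤˣ) :
    ∑ k, |vVec σ x k| = ∑ k : Fin n, (((k : ℕ) : ℤ) + 1) := by
  simp only [abs_vVec]
  exact Equiv.sum_comp σ⁻¹ (fun k : Fin n => ((k : ℕ) : ℤ) + 1)

theorem vVec_inj {σ₁ σ₂ : Equiv.Perm (Fin n)} {x₁ x₂ : Fin n → ℤˣ} :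
    vVec σ₁ x₁ = vVec σ₂ x₂ ↔ σ₁ = σ₂ ∧ x₁ = x₂ := by
  refine ⟨fun h => ?_, fun ⟨hσ, hx⟩ => hσ ▸ hx ▸ rfl⟩
  have hσ : σ₁ = σ₂ := by
    refine inv_injective (Equiv.ext fun k => Fin.ext ?_)
    have := congrArg (fun v => |v k|) h
    simp only [abs_vVec] at this
    exact_mod_cast add_right_cancel this
  subst hσ
  refine ⟨rfl, funext fun k => Units.ext ?_⟩
  exact mul_right_cancel₀ (by positivity) (congrFun h k)

theorem abs_eq_abs_of_smul_vVec_eq (hn : 0 < n) {i j : ℤ} {σ₁ σ₂ : Equiv.Perm (Fin n)}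
    {x₁ x₂ : Fin n → ℤˣ} (h : i • vVec σ₁ x₁ = j • vVec σ₂ x₂) : |i| = |j| := by
  have hS : (0 : ℤ) < ∑ k : Fin n, (((k : ℕ) : ℤ) + 1) :=
    Finset.sum_pos (fun _ _ => by positivity) ⟨⟨0, hn⟩, Finset.mem_univ _⟩
  refine mul_right_cancel₀ hS.ne' ?_
  calc |i| * ∑ k : Fin n, (((k : ℕ) : ℤ) + 1)
      = ∑ k, |(i • vVec σ₁ x₁) k| := by simp [abs_mul, ← Finset.mul_sum, sum_abs_vVec]
    _ = ∑ k, |(j • vVec σ₂ x₂) k| := by rw [h]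
    _ = |j| * ∑ k : Fin n, (((k : ℕ) : ℤ) + 1) := by
        simp [abs_mul, ← Finset.mul_sum, sum_abs_vVec]

theorem smul_vVec_eq_smul_vVec (hn : 0 < n) {i j : ℤ} (hi : i ≠ 0)
    {σ₁ σ₂ : Equiv.Perm (Fin n)} {x₁ x₂ : Fin n → ℤˣ} (h : i • vVec σ₁ x₁ = j • vVec σ₂ x₂) :
    (i = j ∧ σ₁ = σ₂ ∧ x₁ = x₂) ∨ (i = -j ∧ σ₁ = σ₂ ∧ x₁ = -x₂) := by
  rcases abs_eq_abs.1 (abs_eq_abs_of_smul_vVec_eq hn h) with rfl | rfl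
  · left
    exact ⟨rfl, vVec_inj.1 (smul_right_injective _ hi h)⟩
  · right
    rw [← neg_smul_neg j (vVec σ₂ x₂), ← vVec_neg] at h
    exact ⟨rfl, vVec_inj.1 (smul_right_injective _ hi h)⟩

end vVec

theorem eta_powers_equal_cases_general (n a : ℕ) (hn : 2 ≤ n) (ha : 6 * n + 1 ≤ a)
    (i j : ℤ) (hi1 : 1 ≤ |i|) (hi3 : |i| ≤ 3) (hj3 : |j| ≤ 3)
    (σ₁ σ₂ : Equiv.Perm (Fin n)) (x₁ x₂ : Fin n → ℤˣ)
    (h : (i • Submodule.Quotient.mk (vVec σ₁ x₁) : (Fin n → ℤ) ⧸ dvdLattice n a) =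
      j • Submodule.Quotient.mk (vVec σ₂ x₂)) :
    (i = j ∧ σ₁ = σ₂ ∧ x₁ = x₂) ∨ (i = -j ∧ σ₁ = σ₂ ∧ x₁ = -x₂) := by
  have hbound : ∀ c : ℤ, |c| ≤ 3 → ∀ σ x k, |(c • vVec σ x) k| ≤ 3 * n := fun c hc σ x k => by
    rw [Pi.smul_apply, smul_eq_mul, abs_mul]
    exact mul_le_mul hc (abs_vVec_le σ x k) (abs_nonneg _) (by norm_num)
  rw [← Submodule.Quotient.mk_smul, ← Submodule.Quotient.mk_smul] at h
  have hZ := eq_of_mk_eq_mk_dvdLattice (by omega) (hbound i hi3 σ₁ x₁)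
    (hbound j hj3 σ₂ x₂) h
  exact smul_vVec_eq_smul_vVec (by omega) (abs_pos.1 (by omega)) hZ

/-- For `Λ = aℤⁿ` with `a ≥ 6n+1` and `i, j ∈ {±1, ±2, ±3}`: if
`i·v(σ₁, x₁) = j·v(σ₂, x₂)` in `ℤⁿ/aℤⁿ`, then either `i = j`, `σ₁ = σ₂` and `x₁ = x₂`,
or `i = −j`, `σ₁ = σ₂` and `x₁ = −x₂`. -/
theorem eta_powers_equal_cases (n a : ℕ) (hn : 2 ≤ n) (ha : 6 * n + 1 ≤ a)
    (i j : ℤ) (hi1 : 1 ≤ |i|) (hi3 : |i| ≤ 3) (hj1 : 1 ≤ |j|) (hj3 : |j| ≤ 3)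
    (σ₁ σ₂ : Equiv.Perm (Fin n)) (x₁ x₂ : Fin n → ℤˣ)
    (h : (i • Submodule.Quotient.mk (vVec σ₁ x₁) : (Fin n → ℤ) ⧸ dvdLattice n a) =
      j • Submodule.Quotient.mk (vVec σ₂ x₂)) :
    (i = j ∧ σ₁ = σ₂ ∧ x₁ = x₂) ∨ (i = -j ∧ σ₁ = σ₂ ∧ x₁ = -x₂) :=
  eta_powers_equal_cases_general n a hn ha i j hi1 hi3 hj3 σ₁ σ₂ x₁ x₂ h
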